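/- Let X be the smooth vector field on ℝ² given by X(x,y) = ((2 + 3xy²)x, −(1 + 2xy²)y), and let S be the linear vector field S(x,y) = (2x, −y) (the semisimple linear part of X). Then there exists a smooth nowhere-vanishing function ρ on a neighborhood of the origin with ρ(0,0) = 1 such that the 2-form ω₁ = ρ·dx∧dy satisfies L_X ω₁ = ω₁ near the origin, while L_S ω₁ ≠ ω₁ on every neighborhood of the origin. Consequently, in the smooth category a vector field in Poincaré–Dulac normal form can conformally preserve a symplectic form that its semisimple part does not conformally preserve. -/

import Mathlib

open scoped Topology

/-!
Both `X` and `S` have divergence `1`, so for either of them `L(ρ dx∧dy) = ρ dx∧dy` says exactly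
that `ρ` is a first integral. With `u = xy²` and `g = x²y³` one has `S u = 0`, `X u = -u²` and
`S g = X g = g`. The flat function `E(t) = exp(-1/t)` solves `t² E' = E`, hence
`ρ = 1 + g E(u)` satisfies `X ρ = g E(u) - g u² E'(u) = 0`, while `S ρ = g E(u)` is positive at
every point `(t, t)` with `t > 0`.
-/

lemma hasDerivAt_expNegInvGlue (t : ℝ) :
    HasDerivAt expNegInvGlue (t⁻¹ ^ 2 * expNegInvGlue t) t := by
  simpa using expNegInvGlue.hasDerivAt_polynomial_eval_inv_mul 1 t

lemma sq_mul_deriv_expNegInvGlue (t : ℝ) : t ^ 2 * deriv expNegInvGlue t = expNegInvGlue t := by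
  rw [(hasDerivAt_expNegInvGlue t).deriv]
  rcases eq_or_ne t 0 with rfl | ht
  · simp [expNegInvGlue.zero]
  · field_simp

@[fun_prop]
lemma differentiable_expNegInvGlue : Differentiable ℝ expNegInvGlue :=
  fun t => (hasDerivAt_expNegInvGlue t).differentiableAt

noncomputable def conformalDensity (p : ℝ × ℝ) : ℝ :=
  1 + p.1 ^ 2 * p.2 ^ 3 * expNegInvGlue (p.1 * p.2 ^ 2)

lemma contDiff_conformalDensity {n : ℕ∞} : ContDiff ℝ n conformalDensity :=
  contDiff_const.add <| ((contDiff_fst.pow 2).mul (contDiff_snd.pow 3)).mul <|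
    expNegInvGlue.contDiff.comp (contDiff_fst.mul (contDiff_snd.pow 2))

lemma conformalDensity_zero : conformalDensity (0, 0) = 1 := by
  simp [conformalDensity]

lemma fderiv_conformalDensity_apply (p v : ℝ × ℝ) :
    fderiv ℝ conformalDensity p v =
      expNegInvGlue (p.1 * p.2 ^ 2) * (2 * p.1 * p.2 ^ 3 * v.1 + 3 * p.1 ^ 2 * p.2 ^ 2 * v.2)
        + p.1 ^ 2 * p.2 ^ 3 * deriv expNegInvGlue (p.1 * p.2 ^ 2)
          * (p.2 ^ 2 * v.1 + 2 * p.1 * p.2 * v.2) := by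
  have hEu : fderiv ℝ (fun q : ℝ × ℝ => expNegInvGlue (q.1 * q.2 ^ 2)) p v
      = deriv expNegInvGlue (p.1 * p.2 ^ 2) * (p.2 ^ 2 * v.1 + 2 * p.1 * p.2 * v.2) := by
    rw [fderiv_fun_comp p (by fun_prop) (by fun_prop)]
    simp (disch := fun_prop) [fderiv_fun_mul, fderiv_fun_pow, fderiv_fst, fderiv_snd]
    ring
  unfold conformalDensity
  simp (disch := fun_prop) [fderiv_fun_mul, fderiv_fun_pow, fderiv_fst, fderiv_snd, hEu]
  ring

lemma fderiv_conformalDensity_normalForm (p : ℝ × ℝ) :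
    fderiv ℝ conformalDensity p ((2 + 3 * p.1 * p.2 ^ 2) * p.1, -(1 + 2 * p.1 * p.2 ^ 2) * p.2)
      = 0 := by
  rw [fderiv_conformalDensity_apply]
  linear_combination (-(p.1 ^ 2 * p.2 ^ 3)) * sq_mul_deriv_expNegInvGlue (p.1 * p.2 ^ 2)

lemma fderiv_conformalDensity_semisimple (p : ℝ × ℝ) :
    fderiv ℝ conformalDensity p (2 * p.1, -p.2)
      = p.1 ^ 2 * p.2 ^ 3 * expNegInvGlue (p.1 * p.2 ^ 2) := by
  rw [fderiv_conformalDensity_apply]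
  ring

lemma divergence_normalForm (p : ℝ × ℝ) :
    fderiv ℝ (fun q : ℝ × ℝ => (2 + 3 * q.1 * q.2 ^ 2) * q.1) p (1, 0)
      + fderiv ℝ (fun q : ℝ × ℝ => -(1 + 2 * q.1 * q.2 ^ 2) * q.2) p (0, 1) = 1 := by
  simp (disch := fun_prop) [fderiv_fun_mul, fderiv_fun_pow, fderiv_fst, fderiv_snd, fderiv_fun_neg]
  ring

lemma divergence_semisimple (p : ℝ × ℝ) :
    fderiv ℝ (fun q : ℝ × ℝ => 2 * q.1) p (1, 0) + fderiv ℝ (fun q : ℝ × ℝ => -q.2) p (0, 1)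
      = 1 := by
  simp (disch := fun_prop) [fderiv_const_mul, fderiv_fst, fderiv_snd, fderiv_fun_neg]
  norm_num

lemma exists_pos_diag_mem {V : Set (ℝ × ℝ)} (hV : V ∈ 𝓝 ((0 : ℝ), (0 : ℝ))) :
    ∃ t > 0, (t, t) ∈ V := by
  have hdiag : Filter.Tendsto (fun t : ℝ => (t, t)) (𝓝[>] 0) (𝓝 (0, 0)) :=
    ((continuous_id.prodMk continuous_id).tendsto' 0 (0, 0) rfl).mono_left nhdsWithin_le_nhds
  obtain ⟨t, htV, ht⟩ := ((hdiag.eventually hV).and self_mem_nhdsWithin).exists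
  exact ⟨t, ht, htV⟩

/-- (Example of Section 2.4: failure of the conservation law in the smooth
category.) For the vector field `X(x,y) = ((2+3xy²)x, −(1+2xy²)y)` on `ℝ²`, in Poincaré–Dulac
normal form with semisimple linear part `S(x,y) = (2x, −y)`, there is a smooth nowhere-vanishing
function `ρ` near the origin with `ρ(0,0) = 1` such that `ω₁ = ρ·dx∧dy` satisfies
`L_X ω₁ = ω₁` near the origin while `L_S ω₁ ≠ ω₁` on every neighborhood of the origin.
Here, for `ω = ρ dx∧dy` on `ℝ²`, `L_X ω = (X(ρ) + ρ·div X)·dx∧dy`, and the divergence is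
written out via partial derivatives of the components. -/
theorem smooth_counterexample_conservation_law :
    ∃ (ρ : ℝ × ℝ → ℝ) (U : Set (ℝ × ℝ)), IsOpen U ∧ ((0:ℝ), (0:ℝ)) ∈ U ∧
      ContDiffOn ℝ (⊤ : ℕ∞) ρ U ∧
      (∀ p ∈ U, ρ p ≠ 0) ∧
      ρ ((0:ℝ), (0:ℝ)) = 1 ∧
      -- L_X ω₁ = ω₁ on U, i.e.  X(ρ) + ρ · div X = ρ :
      (∀ p ∈ U,
        fderiv ℝ ρ p ((2 + 3 * p.1 * p.2 ^ 2) * p.1, -(1 + 2 * p.1 * p.2 ^ 2) * p.2)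
          + ρ p * (fderiv ℝ (fun q : ℝ × ℝ => (2 + 3 * q.1 * q.2 ^ 2) * q.1) p (1, 0)
                  + fderiv ℝ (fun q : ℝ × ℝ => -(1 + 2 * q.1 * q.2 ^ 2) * q.2) p (0, 1))
          = ρ p) ∧
      -- L_S ω₁ ≠ ω₁ on every neighborhood of the origin, i.e.  S(ρ) + ρ · div S ≠ ρ somewhere :
      (∀ V ∈ nhds ((0:ℝ), (0:ℝ)), ∃ p ∈ V,
        fderiv ℝ ρ p (2 * p.1, -p.2)
          + ρ p * (fderiv ℝ (fun q : ℝ × ℝ => 2 * q.1) p (1, 0)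
                  + fderiv ℝ (fun q : ℝ × ℝ => -q.2) p (0, 1))
          ≠ ρ p) := by
  refine ⟨conformalDensity, {p | conformalDensity p ≠ 0},
    isOpen_ne_fun (contDiff_conformalDensity (n := 0)).continuous continuous_const, ?_,
    contDiff_conformalDensity.contDiffOn, fun p hp => hp, conformalDensity_zero, ?_, ?_⟩
  · simp [conformalDensity_zero]
  · intro p _
    rw [fderiv_conformalDensity_normalForm, divergence_normalForm]
    ring
  · intro V hV
    obtain ⟨t, ht, htV⟩ := exists_pos_diag_mem hV
    refine ⟨(t, t), htV, ?_⟩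
    rw [fderiv_conformalDensity_semisimple, divergence_semisimple, mul_one, add_ne_right]
    have : 0 < expNegInvGlue (t * t ^ 2) := expNegInvGlue.pos_of_pos (by positivity)
    positivity
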